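/- Let $n\in\{2,3\}$, $v:\mathbb{R}^n\to\mathbb{R}$ a measurable potential, $\varphi\in C_0^\infty(\mathbb{R}^n\setminus\{0\};\mathbb{C}^{n-1})\setminus\{0\}$, and $\lambda\in(-1,\infty)$ with $1+\lambda-v(x)>0$ a.e. Define $J(\lambda):=\int_{\mathbb{R}^n}\left(\frac{|K_n\varphi(x)|^2}{1+\lambda-v(x)}+(1-\lambda+v(x))|\varphi(x)|^2\right)dx$ and for $\psi\in H^1(\mathbb{R}^n\setminus\{0\};\mathbb{C}^{n-1})$ define $I(\psi):=\frac{\langle\varphi,(1+v)\varphi\rangle+2\Re\langle\psi,K_n\varphi\rangle+\langle\psi,(-1+v)\psi\rangle}{\|\varphi\|^2+\|\psi\|^2}$. If $J(\lambda)\leq 0$, then $\sup_{\psi} I(\psi)\leq\lambda$. -/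

import Mathlib

open MeasureTheory Complex

/-- The Pauli matrices `σ₁, σ₂, σ₃`. -/
noncomputable def pauli : Fin 3 → Matrix (Fin 2) (Fin 2) ℂ :=
  ![!![0, 1; 1, 0], !![0, -Complex.I; Complex.I, 0], !![1, 0; 0, -1]]

/-- The coefficient matrices of the first-order operator `K_n`:
for `n = 2`, `K₂ = -i∂₁ - ∂₂` (scalar, viewed as `1×1` matrices);
for `n = 3`, `K₃ = -iσ·∇`, so the `j`-th coefficient is `-i σ_j`. -/
noncomputable def Amat : (n : ℕ) → Fin n → Matrix (Fin (n - 1)) (Fin (n - 1)) ℂ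
  | 2 => fun j => if j = (0 : Fin 2) then (-Complex.I) • (1 : Matrix (Fin 1) (Fin 1) ℂ)
      else (-1 : Matrix (Fin 1) (Fin 1) ℂ)
  | 3 => fun j => (-Complex.I) • pauli j
  | _ => fun _ => 0

/-- The operator `K_n` (`K₂ = -i∂₁-∂₂`, `K₃ = -iσ·∇`) applied to a
`ℂ^{n-1}`-valued function on `ℝⁿ`. -/
noncomputable def Kop (n : ℕ)
    (φ : EuclideanSpace ℝ (Fin n) → EuclideanSpace ℂ (Fin (n - 1)))
    (x : EuclideanSpace ℝ (Fin n)) : EuclideanSpace ℂ (Fin (n - 1)) :=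
  ∑ j : Fin n, (WithLp.equiv 2 (Fin (n - 1) → ℂ)).symm
    ((Amat n j).mulVec ((WithLp.equiv 2 (Fin (n - 1) → ℂ))
      (fderiv ℝ φ x (EuclideanSpace.single j 1))))

open scoped InnerProductSpace

theorem Kop_continuous (n : ℕ)
    (φ : EuclideanSpace ℝ (Fin n) → EuclideanSpace ℂ (Fin (n - 1)))
    (hφ : ContDiff ℝ (⊤ : ℕ∞) φ) : Continuous (Kop n φ) := by
  apply continuous_finset_sum
  intro j _
  exact (PiLp.continuous_toLp 2 _).comp
    ((continuous_const.matrix_mulVec ((PiLp.continuous_ofLp 2 _).comp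
      (((hφ.continuous_fderiv (by simp))).clm_apply continuous_const))))

theorem Kop_compactSupport (n : ℕ)
    (φ : EuclideanSpace ℝ (Fin n) → EuclideanSpace ℂ (Fin (n - 1)))
    (hφc : HasCompactSupport φ) : HasCompactSupport (Kop n φ) := by
  have h1 : HasCompactSupport (fderiv ℝ φ) := hφc.fderiv (𝕜 := ℝ)
  have h2 := h1.comp_left
    (g := fun T : EuclideanSpace ℝ (Fin n) →L[ℝ] EuclideanSpace ℂ (Fin (n - 1)) =>
      ∑ j : Fin n, (WithLp.equiv 2 (Fin (n - 1) → ℂ)).symm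
        ((Amat n j).mulVec ((WithLp.equiv 2 (Fin (n - 1) → ℂ))
          (T (EuclideanSpace.single j 1))))) (by simp only [ContinuousLinearMap.zero_apply]; simp)
  exact h2

/-- Lemma 5.1 (the key step towards the Hardy–Dirac inequality): if
`J(λ) = ∫ (|K_nφ|²/(1+λ-v) + (1-λ+v)|φ|²) dx ≤ 0` for some `λ ∈ (-1,∞)`, then for every
lower spinor `ψ` the Talman quotient `I(ψ)` is at most `λ`. -/
theorem stmt3 (n : ℕ) (hn : n = 2 ∨ n = 3)
    (v : EuclideanSpace ℝ (Fin n) → ℝ) (hv : Measurable v)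
    (φ : EuclideanSpace ℝ (Fin n) → EuclideanSpace ℂ (Fin (n - 1)))
    (hφ : ContDiff ℝ (⊤ : ℕ∞) φ) (hφc : HasCompactSupport φ)
    (hφs : tsupport φ ⊆ {x | x ≠ 0}) (hφ0 : φ ≠ 0)
    (lam : ℝ) (hlam : -1 < lam) (hpos : ∀ x, 0 < 1 + lam - v x)
    (hint1 : Integrable (fun x => v x * ‖φ x‖ ^ 2))
    (hint2 : Integrable (fun x => ‖Kop n φ x‖ ^ 2 / (1 + lam - v x)))
    (hJ : (∫ x : EuclideanSpace ℝ (Fin n),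
        (‖Kop n φ x‖ ^ 2 / (1 + lam - v x) + (1 - lam + v x) * ‖φ x‖ ^ 2)) ≤ 0) :
    ∀ ψ : EuclideanSpace ℝ (Fin n) → EuclideanSpace ℂ (Fin (n - 1)),
      MemLp ψ 2 volume →
      Integrable (fun x => v x * ‖ψ x‖ ^ 2) →
      ((∫ x : EuclideanSpace ℝ (Fin n), (1 + v x) * ‖φ x‖ ^ 2)
          + 2 * (∫ x : EuclideanSpace ℝ (Fin n), ((⟪ψ x, Kop n φ x⟫_ℂ : ℂ)).re)
          + ∫ x : EuclideanSpace ℝ (Fin n), (-1 + v x) * ‖ψ x‖ ^ 2)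
        / ((∫ x : EuclideanSpace ℝ (Fin n), ‖φ x‖ ^ 2)
          + ∫ x : EuclideanSpace ℝ (Fin n), ‖ψ x‖ ^ 2) ≤ lam := by
  intro ψ hψ hvψ
  set K : EuclideanSpace ℝ (Fin n) → EuclideanSpace ℂ (Fin (n - 1)) := Kop n φ with hKdef
  have hKcont : Continuous K := Kop_continuous n φ hφ
  have hKc : HasCompactSupport K := Kop_compactSupport n φ hφc
  -- integrability facts
  have hφ2 : Integrable (fun x : EuclideanSpace ℝ (Fin n) => ‖φ x‖ ^ 2) :=
    (show Continuous (fun x : EuclideanSpace ℝ (Fin n) => ‖φ x‖ ^ 2) from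
      hφ.continuous.norm.pow 2).integrable_of_hasCompactSupport
      (show HasCompactSupport (fun x : EuclideanSpace ℝ (Fin n) => ‖φ x‖ ^ 2) from
        hφc.comp_left (g := fun y => ‖y‖ ^ 2) (by simp))
  have hK2 : Integrable (fun x : EuclideanSpace ℝ (Fin n) => ‖K x‖ ^ 2) :=
    (show Continuous (fun x : EuclideanSpace ℝ (Fin n) => ‖K x‖ ^ 2) from
      hKcont.norm.pow 2).integrable_of_hasCompactSupport
      (show HasCompactSupport (fun x : EuclideanSpace ℝ (Fin n) => ‖K x‖ ^ 2) from
        hKc.comp_left (g := fun y => ‖y‖ ^ 2) (by simp))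
  have hψm : AEStronglyMeasurable ψ volume := hψ.1
  have hψ2 : Integrable (fun x : EuclideanSpace ℝ (Fin n) => ‖ψ x‖ ^ 2) :=
    (memLp_two_iff_integrable_sq_norm hψm).mp hψ
  have hIre : Integrable (fun x : EuclideanSpace ℝ (Fin n) => (⟪ψ x, K x⟫_ℂ : ℂ).re) := by
    refine Integrable.mono' ((hψ2.add hK2).div_const 2)
      (Complex.continuous_re.comp_aestronglyMeasurable
        (hψm.inner hKcont.aestronglyMeasurable)) ?_
    filter_upwards with x
    have h1 : |(⟪ψ x, K x⟫_ℂ : ℂ).re| ≤ ‖(⟪ψ x, K x⟫_ℂ : ℂ)‖ := Complex.abs_re_le_norm _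
    have h2 : ‖(⟪ψ x, K x⟫_ℂ : ℂ)‖ ≤ ‖ψ x‖ * ‖K x‖ := norm_inner_le_norm _ _
    have h3 : ‖ψ x‖ * ‖K x‖ ≤ (‖ψ x‖ ^ 2 + ‖K x‖ ^ 2) / 2 := by
      nlinarith [sq_nonneg (‖ψ x‖ - ‖K x‖)]
    simp only [Real.norm_eq_abs, Pi.add_apply]
    linarith
  -- pointwise inequality
  have hpt : ∀ x, (1 - lam + v x) * ‖φ x‖ ^ 2 +
      (2 * (⟪ψ x, K x⟫_ℂ : ℂ).re + (-1 - lam + v x) * ‖ψ x‖ ^ 2) ≤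
      ‖K x‖ ^ 2 / (1 + lam - v x) + (1 - lam + v x) * ‖φ x‖ ^ 2 := by
    intro x
    have hc := hpos x
    have hre : (⟪ψ x, K x⟫_ℂ : ℂ).re ≤ ‖ψ x‖ * ‖K x‖ := by
      have := re_inner_le_norm (𝕜 := ℂ) (ψ x) (K x)
      simpa using this
    have key : 2 * (‖ψ x‖ * ‖K x‖) - (1 + lam - v x) * ‖ψ x‖ ^ 2 ≤
        ‖K x‖ ^ 2 / (1 + lam - v x) := by
      rw [le_div_iff₀ hc]
      nlinarith [sq_nonneg ((1 + lam - v x) * ‖ψ x‖ - ‖K x‖)]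
    nlinarith [key, hre]
  -- integrability of both sides
  have I1 : Integrable (fun x : EuclideanSpace ℝ (Fin n) =>
      (1 - lam + v x) * ‖φ x‖ ^ 2) := by
    have h := (hφ2.const_mul (1 - lam)).add hint1
    exact h.congr (Filter.Eventually.of_forall fun x => by simp only [Pi.add_apply]; ring)
  have I2 : Integrable (fun x : EuclideanSpace ℝ (Fin n) =>
      (-1 - lam + v x) * ‖ψ x‖ ^ 2) := by
    have h := (hψ2.const_mul (-1 - lam)).add hvψ
    exact h.congr (Filter.Eventually.of_forall fun x => by simp only [Pi.add_apply]; ring)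
  have I3 : Integrable (fun x : EuclideanSpace ℝ (Fin n) =>
      2 * (⟪ψ x, K x⟫_ℂ : ℂ).re + (-1 - lam + v x) * ‖ψ x‖ ^ 2) :=
    (hIre.const_mul 2).add I2
  have Ilhs : Integrable (fun x : EuclideanSpace ℝ (Fin n) =>
      (1 - lam + v x) * ‖φ x‖ ^ 2 +
        (2 * (⟪ψ x, K x⟫_ℂ : ℂ).re + (-1 - lam + v x) * ‖ψ x‖ ^ 2)) := I1.add I3
  have Irhs : Integrable (fun x : EuclideanSpace ℝ (Fin n) =>
      ‖K x‖ ^ 2 / (1 + lam - v x) + (1 - lam + v x) * ‖φ x‖ ^ 2) := hint2.add I1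
  have hineq : (∫ x, ((1 - lam + v x) * ‖φ x‖ ^ 2 +
      (2 * (⟪ψ x, K x⟫_ℂ : ℂ).re + (-1 - lam + v x) * ‖ψ x‖ ^ 2))) ≤ 0 :=
    le_trans (integral_mono Ilhs Irhs hpt) hJ
  -- split integrals
  have split1 : (∫ x, ((1 - lam + v x) * ‖φ x‖ ^ 2 +
      (2 * (⟪ψ x, K x⟫_ℂ : ℂ).re + (-1 - lam + v x) * ‖ψ x‖ ^ 2))) =
      (∫ x, (1 - lam + v x) * ‖φ x‖ ^ 2) +
        ((∫ x, 2 * (⟪ψ x, K x⟫_ℂ : ℂ).re) + ∫ x, (-1 - lam + v x) * ‖ψ x‖ ^ 2) := by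
    rw [integral_add I1 I3, integral_add (hIre.const_mul 2) I2]
  have e1 : (∫ x, (1 - lam + v x) * ‖φ x‖ ^ 2) =
      (1 - lam) * (∫ x, ‖φ x‖ ^ 2) + ∫ x, v x * ‖φ x‖ ^ 2 := by
    rw [← integral_const_mul, ← integral_add (hφ2.const_mul _) hint1]
    congr 1 with x
    ring
  have e2 : (∫ x, (-1 - lam + v x) * ‖ψ x‖ ^ 2) =
      (-1 - lam) * (∫ x, ‖ψ x‖ ^ 2) + ∫ x, v x * ‖ψ x‖ ^ 2 := by
    rw [← integral_const_mul, ← integral_add (hψ2.const_mul _) hvψ]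
    congr 1 with x
    ring
  have e3 : (∫ x, (1 + v x) * ‖φ x‖ ^ 2) =
      (∫ x, ‖φ x‖ ^ 2) + ∫ x, v x * ‖φ x‖ ^ 2 := by
    rw [← integral_add hφ2 hint1]
    congr 1 with x
    ring
  have e4 : (∫ x, (-1 + v x) * ‖ψ x‖ ^ 2) =
      (-1 : ℝ) * (∫ x, ‖ψ x‖ ^ 2) + ∫ x, v x * ‖ψ x‖ ^ 2 := by
    rw [← integral_const_mul, ← integral_add (hψ2.const_mul _) hvψ]
    congr 1 with x
    ring
  have e5 : (∫ x, 2 * (⟪ψ x, K x⟫_ℂ : ℂ).re) = 2 * ∫ x, (⟪ψ x, K x⟫_ℂ : ℂ).re :=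
    integral_const_mul 2 _
  -- positivity of the denominator
  have hA : 0 < ∫ x, ‖φ x‖ ^ 2 := by
    rw [integral_pos_iff_support_of_nonneg (fun x => by positivity) hφ2]
    obtain ⟨x0, hx0⟩ := Function.ne_iff.mp hφ0
    have hopen : IsOpen (Function.support fun x : EuclideanSpace ℝ (Fin n) => ‖φ x‖ ^ 2) := by
      rw [Function.support_eq_preimage]
      exact (hφ.continuous.norm.pow 2).isOpen_preimage _ isOpen_compl_singleton
    have hx0' : φ x0 ≠ 0 := by simpa using hx0
    refine hopen.measure_pos volume ⟨x0, ?_⟩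
    simpa [Function.mem_support] using pow_ne_zero 2 (norm_ne_zero_iff.mpr hx0')
  have hB : 0 ≤ ∫ x, ‖ψ x‖ ^ 2 := integral_nonneg fun x => by positivity
  have hD : 0 < (∫ x, ‖φ x‖ ^ 2) + ∫ x, ‖ψ x‖ ^ 2 := by linarith
  rw [div_le_iff₀ hD]
  rw [split1, e1, e2, e5] at hineq
  rw [e3, e4]
  nlinarith [hineq, hA, hB]
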